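/- arXiv:2503.09489 — 3 statements merged into one kernel-verified Lean document; each statement's English description precedes it below -/
import Mathlib

section
/- For all complex numbers z, z₀ and positive reals d, d₀, the function f(z,d) = log(1 + |z|²/d) satisfies the lower bound f(z,d) ≥ log(1+|z₀|²/d₀) + 2·Re(conj(z₀)·z/d₀) − (|z₀|²/(d₀(d₀+|z₀|²)))·(|z|² + d) − |z₀|²/d₀, with equality when (z,d) = (z₀,d₀). -/
/-!
Put `a = |z|²`, `b = |z₀|²`, `t = a + d`, `s = d₀ + b`. Concavity of `log`, in the form
`log x ≥ log x₀ + 1 - x₀ / x`, applied to `x = t / d` and `x₀ = s / d₀` leaves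
`2 Re(z̄₀ z) ≤ a s / t + b t / s` to be shown, and this is the tangent-plane inequality of the
jointly convex function `(z, t) ↦ |z|² / t` at `(z₀, s)`.
-/

theorem two_mul_inner_div_sub_le_norm_sq_div {E : Type*} [NormedAddCommGroup E]
    [InnerProductSpace ℝ E] (x y : E) {s t : ℝ} (hs : 0 < s) (ht : 0 < t) :
    2 * inner ℝ y x / s - ‖y‖ ^ 2 * t / s ^ 2 ≤ ‖x‖ ^ 2 / t := by
  have hsq : 0 ≤ ‖s • x - t • y‖ ^ 2 := sq_nonneg _
  rw [norm_sub_sq_real, norm_smul, norm_smul, real_inner_smul_left, real_inner_smul_right,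
    real_inner_comm, Real.norm_of_nonneg hs.le, Real.norm_of_nonneg ht.le] at hsq
  rw [div_sub_div _ _ hs.ne' (by positivity), div_le_div_iff₀ (by positivity) ht]
  nlinarith [mul_pos hs ht]

theorem Real.log_add_one_sub_div_le_log {x x₀ : ℝ} (hx : 0 < x) (hx₀ : 0 < x₀) :
    Real.log x₀ + (1 - x₀ / x) ≤ Real.log x := by
  have h := Real.one_sub_inv_le_log_of_pos (div_pos hx hx₀)
  rw [inv_div, Real.log_div hx.ne' hx₀.ne'] at h
  linarith

/-- First-order Taylor-expansion lower bound of `log(1 + |z|^2 / d)` (Lemma 2),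
with equality at `(z, d) = (z₀, d₀)`. -/
theorem stmt_0 (z z₀ : ℂ) (d d₀ : ℝ) (hd : 0 < d) (hd₀ : 0 < d₀) :
    Real.log (1 + ‖z‖ ^ 2 / d) ≥
      Real.log (1 + ‖z₀‖ ^ 2 / d₀)
        + 2 * (((starRingEnd ℂ) z₀ * z).re / d₀)
        - ‖z₀‖ ^ 2 / (d₀ * (d₀ + ‖z₀‖ ^ 2)) * (‖z‖ ^ 2 + d)
        - ‖z₀‖ ^ 2 / d₀
    ∧ (z = z₀ → d = d₀ →
        Real.log (1 + ‖z‖ ^ 2 / d) =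
          Real.log (1 + ‖z₀‖ ^ 2 / d₀)
            + 2 * (((starRingEnd ℂ) z₀ * z).re / d₀)
            - ‖z₀‖ ^ 2 / (d₀ * (d₀ + ‖z₀‖ ^ 2)) * (‖z‖ ^ 2 + d)
            - ‖z₀‖ ^ 2 / d₀) := by
  have hre : ((starRingEnd ℂ) z₀ * z).re = inner ℝ z₀ z := by rw [Complex.inner, mul_comm]
  have hs : 0 < d₀ + ‖z₀‖ ^ 2 := by positivity
  have ht : 0 < ‖z‖ ^ 2 + d := by positivity
  refine ⟨?_, ?_⟩
  · have hlog := Real.log_add_one_sub_div_le_log (x := 1 + ‖z‖ ^ 2 / d)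
      (x₀ := 1 + ‖z₀‖ ^ 2 / d₀) (by positivity) (by positivity)
    have htan := two_mul_inner_div_sub_le_norm_sq_div z z₀ hs ht
    rw [hre]
    set a := ‖z‖ ^ 2
    set b := ‖z₀‖ ^ 2
    set R := inner ℝ z₀ z
    set gap := a / (a + d) - (2 * R / (d₀ + b) - b * (a + d) / (d₀ + b) ^ 2) with hgap_def
    have hgap : 0 ≤ (d₀ + b) / d₀ * gap := mul_nonneg (by positivity) (sub_nonneg.mpr htan)
    have hsplit : 2 * (R / d₀) - b / (d₀ * (d₀ + b)) * (a + d) - b / d₀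
        = (1 - (1 + b / d₀) / (1 + a / d)) - (d₀ + b) / d₀ * gap := by
      rw [hgap_def]
      have hda : d + a ≠ 0 := by positivity
      field_simp
      ring
    linarith
  · rintro rfl rfl
    have hself : ((starRingEnd ℂ) z * z).re = ‖z‖ ^ 2 := by
      rw [Complex.conj_mul', ← Complex.ofReal_pow, Complex.ofReal_re]
    rw [hself]
    field_simp
    ring
end

section
/- For any two positive definite Hermitian matrices Z and Z₀ of the same size, −tr(Z⁻¹) ≤ tr(Z₀⁻¹ Z Z₀⁻¹) − 2·tr(Z₀⁻¹), with equality when Z = Z₀. -/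
/-!
Put `M = Z₀⁻¹ - Z⁻¹`. Expanding, `M Z M = Z₀⁻¹ Z Z₀⁻¹ - 2 Z₀⁻¹ + Z⁻¹`, and `M Z M = Mᴴ Z M` is
positive semidefinite because `M` is Hermitian, so its trace is nonnegative.
-/

open Matrix
open scoped ComplexOrder

namespace Matrix

variable {ι α : Type*} [Fintype ι] [DecidableEq ι]

lemma sub_inv_mul_mul_sub_inv [CommRing α] (A B : Matrix ι ι α) (hB : IsUnit B.det) :
    (A - B⁻¹) * B * (A - B⁻¹) = A * B * A - 2 • A + B⁻¹ := by
  simp only [Matrix.sub_mul, Matrix.mul_sub, nonsing_inv_mul _ hB, Matrix.one_mul,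
    mul_nonsing_inv_cancel_right _ _ hB, two_nsmul]
  abel

variable {𝕜 : Type*} [RCLike 𝕜]

lemma neg_re_trace_inv_le {Z A : Matrix ι ι 𝕜} (hZ : Z.PosDef) (hA : A.IsHermitian) :
    -RCLike.re (trace Z⁻¹) ≤ RCLike.re (trace (A * Z * A)) - 2 * RCLike.re (trace A) := by
  have hpsd : ((A - Z⁻¹)ᴴ * Z * (A - Z⁻¹)).PosSemidef :=
    hZ.posSemidef.conjTranspose_mul_mul_same _
  rw [(hA.sub hZ.isHermitian.inv).eq,
    sub_inv_mul_mul_sub_inv _ _ ((isUnit_iff_isUnit_det Z).mp hZ.isUnit)] at hpsd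
  have := (RCLike.nonneg_iff.mp hpsd.trace_nonneg).1
  simp only [two_nsmul, trace_add, trace_sub, map_add, map_sub] at this
  linarith

end Matrix

/-- Linearization upper bound for `-tr(Z⁻¹)` over positive definite matrices (Lemma 3),
with equality at `Z = Z₀`. -/
theorem stmt_1 {n : ℕ} (Z Z₀ : Matrix (Fin n) (Fin n) ℂ)
    (hZ : Z.PosDef) (hZ₀ : Z₀.PosDef) :
    -(Matrix.trace Z⁻¹).re ≤
        (Matrix.trace (Z₀⁻¹ * Z * Z₀⁻¹)).re - 2 * (Matrix.trace Z₀⁻¹).re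
    ∧ (Z = Z₀ →
        -(Matrix.trace Z⁻¹).re =
          (Matrix.trace (Z₀⁻¹ * Z * Z₀⁻¹)).re - 2 * (Matrix.trace Z₀⁻¹).re) := by
  refine ⟨neg_re_trace_inv_le hZ hZ₀.isHermitian.inv, ?_⟩
  rintro rfl
  rw [mul_nonsing_inv_cancel_right _ _ ((isUnit_iff_isUnit_det Z).mp hZ.isUnit)]
  ring
end

section
/- Let f : E → ℝ be ρ-weakly convex and differentiable on a real inner product space E, let B be a subset of E on which ‖W‖ is constant (a sphere), and let λ ≥ ρ/2. If W^{t+1} ∈ B maximizes ⟨∇f(W^t) + 2λW^t, W⟩ over W ∈ B where W^t ∈ B, then f(W^{t+1}) ≥ f(W^t). -/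
/-!
Since `λ ≥ ρ/2`, the function `g = f + λ‖·‖²` is convex, and its gradient at `Wᵗ` is exactly the
vector `∇f(Wᵗ) + 2λWᵗ` that the iteration maximizes against. The first-order inequality for convex
functions then gives `g(Wᵗ⁺¹) - g(Wᵗ) ≥ ⟪∇f(Wᵗ) + 2λWᵗ, Wᵗ⁺¹ - Wᵗ⟫ ≥ 0`, and on the sphere `g` and
`f` differ by the constant `λP`.
-/

open RealInnerProductSpace

theorem ConvexOn.le_sub_of_hasFDerivAt {E : Type*} [NormedAddCommGroup E] [NormedSpace ℝ E]
    {s : Set E} {f : E → ℝ} {f' : E →L[ℝ] ℝ} {x y : E} (hf : ConvexOn ℝ s f)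
    (hx : x ∈ s) (hy : y ∈ s) (hf' : HasFDerivAt f f' x) :
    f' (y - x) ≤ f y - f x := by
  have hline : ConvexOn ℝ (AffineMap.lineMap x y ⁻¹' s) (f ∘ AffineMap.lineMap x y) :=
    hf.comp_affineMap _
  have hderiv : HasDerivAt (f ∘ AffineMap.lineMap x y) (f' (y - x)) (0 : ℝ) := by
    rw [← AffineMap.lineMap_apply_zero (k := ℝ) x y] at hf'
    exact hf'.comp_hasDerivAt 0 AffineMap.hasDerivAt_lineMap
  simpa [slope_def_field] using hline.le_slope_of_hasDerivAt (x := 0) (y := 1)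
    (by simpa using hx) (by simpa using hy) zero_lt_one hderiv

section InnerProductSpace

variable {E : Type*} [NormedAddCommGroup E] [InnerProductSpace ℝ E]

theorem ConvexOn.inner_gradient_le [CompleteSpace E] {s : Set E} {f : E → ℝ} {f' x y : E}
    (hf : ConvexOn ℝ s f) (hx : x ∈ s) (hy : y ∈ s) (hf' : HasGradientAt f f' x) :
    ⟪f', y - x⟫ ≤ f y - f x :=
  hf.le_sub_of_hasFDerivAt hx hy hf'

theorem ConvexOn.add_mul_norm_sq_of_le {s : Set E} {f : E → ℝ} {a b : ℝ}
    (hf : ConvexOn ℝ s fun w => f w + a * ‖w‖ ^ 2) (hab : a ≤ b) :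
    ConvexOn ℝ s fun w => f w + b * ‖w‖ ^ 2 := by
  have hstrong : StrongConvexOn s (2 * (b - a)) fun w => f w + b * ‖w‖ ^ 2 := by
    rw [strongConvexOn_iff_convex]
    convert hf using 2 with w
    ring
  exact strongConvexOn_zero.mp (hstrong.mono (by linarith))

theorem HasGradientAt.add_mul_norm_sq [CompleteSpace E] {f : E → ℝ} {f' x : E} (c : ℝ)
    (hf : HasGradientAt f f' x) :
    HasGradientAt (fun w => f w + c * ‖w‖ ^ 2) (f' + (2 * c) • x) x := by
  rw [hasGradientAt_iff_hasFDerivAt]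
  refine (hf.hasFDerivAt.add
    ((hasStrictFDerivAt_norm_sq x).hasFDerivAt.const_mul c)).congr_fderiv ?_
  ext y
  simp only [add_apply, smul_apply, InnerProductSpace.toDual_apply_apply, innerSL_apply_apply,
    inner_add_left, real_inner_smul_left, smul_eq_mul]
  ring

end InnerProductSpace

/-- Monotone ascent of the projected-gradient/SCA iteration on the sphere for a
`ρ`-weakly convex objective with shift parameter `λ ≥ ρ/2`. -/
theorem stmt_11 {E : Type*} [NormedAddCommGroup E] [InnerProductSpace ℝ E]
    [CompleteSpace E]
    (f : E → ℝ) (hf : Differentiable ℝ f) (ρ : ℝ)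
    (hwc : ConvexOn ℝ Set.univ (fun w => f w + ρ / 2 * ‖w‖ ^ 2))
    (B : Set E) (P : ℝ) (hB : ∀ W ∈ B, ‖W‖ ^ 2 = P)
    (lam : ℝ) (hlam : ρ / 2 ≤ lam)
    (Wt Wt1 : E) (hWt : Wt ∈ B) (hWt1 : Wt1 ∈ B)
    (hmax : ∀ W ∈ B,
      ⟪gradient f Wt + (2 * lam) • Wt, W⟫ ≤ ⟪gradient f Wt + (2 * lam) • Wt, Wt1⟫) :
    f Wt ≤ f Wt1 := by
  have hconvex : ConvexOn ℝ Set.univ fun w => f w + lam * ‖w‖ ^ 2 :=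
    hwc.add_mul_norm_sq_of_le hlam
  have hgrad := (hf Wt).hasGradientAt.add_mul_norm_sq lam
  have hfirst := hconvex.inner_gradient_le (y := Wt1) trivial trivial hgrad
  have hascent : 0 ≤ ⟪gradient f Wt + (2 * lam) • Wt, Wt1 - Wt⟫ := by
    rw [inner_sub_right]
    linarith [hmax Wt hWt]
  rw [hB Wt hWt, hB Wt1 hWt1] at hfirst
  linarith
end
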